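/- (Multisite dusting lemma) Let E be a countable measurable color space, γ a partially oriented specification on Ω=E^S, and (α_{y,x})_{x<y} a dust-rate matrix for γ. Then for every y∈S, every x∈⌊{y}⌋=S∖y₊, and every bounded ℱ_{⌊{y}⌋}-measurable function f: δ_x(γ_y f)=0 if x=y; δ_x(γ_y f) ≤ δ_x(f) if x is incomparable with y; and δ_x(γ_y f) ≤ δ_x(f) + δ_y(f)·α_{y,x} if x<y. -/

import Mathlib

open MeasureTheory Filter Topology
open scoped ENNReal

namespace POCpaper

section Geometry

variable {S : Type*} [PartialOrder S]

/-- The past of a set of sites. -/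
def past (Υ : Set S) : Set S := {x | x ∉ Υ ∧ ∃ y ∈ Υ, x < y}

/-- The future of a set of sites. -/
def future (Υ : Set S) : Set S := {x | x ∉ Υ ∧ ∃ y ∈ Υ, y < x}

/-- The outer time of a set of sites: sites incomparable with every site of the set. -/
def outerT (Υ : Set S) : Set S := {x | ∀ y ∈ Υ, ¬ x ≤ y ∧ ¬ y ≤ x}

/-- Maximal elements of a set. -/
def sMax (A : Set S) : Set S := {x | x ∈ A ∧ ∀ y ∈ A, ¬ x < y}

/-- Minimal elements of a set. -/
def sMin (A : Set S) : Set S := {x | x ∈ A ∧ ∀ y ∈ A, ¬ y < x}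

/-- The (strict) past of a single site. -/
def pastPt (x : S) : Set S := {y | y < x}

/-- The (strict) future of a single site. -/
def futPt (x : S) : Set S := {y | x < y}

/-- A time box: a finite set whose past and future are disjoint. -/
def IsTimeBox (Λ : Finset S) : Prop := past (Λ : Set S) ∩ future (Λ : Set S) = ∅

/-- `⌊Λ⌋ = S ∖ Λ₊`. -/
def floorB (Λ : Finset S) : Set S := (future (Λ : Set S))ᶜ

/-- `Λ° = Λ₋ ∪ Λ*`. -/
def ringB (Λ : Finset S) : Set S := past (Λ : Set S) ∪ outerT (Λ : Set S)

/-- The nearest past `∂Λ` of a box. -/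
def nearPast (Λ : Finset S) : Set S := (⋃ x ∈ Λ, sMax (pastPt x)) \ (Λ : Set S)

/-- A slice: a (finite) set of pairwise incomparable sites. -/
def IsSliceSet (A : Set S) : Prop := A.Finite ∧ ∀ x ∈ A, ∀ y ∈ A, x ≠ y → ¬ x ≤ y

end Geometry

/-- The standing assumptions on the site space `S`. -/
structure Standing (S : Type*) [PartialOrder S] : Prop where
  finMax : ∀ x : S, (sMax (pastPt x)).Finite
  finMin : ∀ x : S, (sMin (futPt x)).Finite
  reachMax : ∀ x y : S, y < x → ∃ y₀ ∈ sMax (pastPt x), y ≤ y₀ ∧ y₀ < x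
  reachMin : ∀ x z : S, x < z → ∃ z₀ ∈ sMin (futPt x), z₀ ≤ z ∧ x < z₀
  noMinimal : ∀ x : S, ∃ y : S, y < x

/-- A function is bounded. -/
def Bounded {α : Type*} (f : α → ℝ) : Prop := ∃ C : ℝ, ∀ a, |f a| ≤ C

section Kernels

variable {S : Type*} [PartialOrder S] (E : Type*) [MeasurableSpace E]

/-- `ℱ_Υ`: the sub-σ-algebra of the product σ-algebra generated by the coordinates in `Υ`. -/
def F (Υ : Set S) : MeasurableSpace (S → E) :=
  MeasurableSpace.comap (fun ω (y : Υ) => ω y) MeasurableSpace.pi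

/-- A measure on `Ω` with the σ-algebra `ℱ_{⌊Λ⌋}`. -/
abbrev BoxMeasure (Λ : Finset S) := @Measure (S → E) (F E (floorB Λ))

/-- A proper oriented kernel on a time box `Λ`. -/
structure IsProperKernel (Λ : Finset S) (κ : (S → E) → BoxMeasure E Λ) : Prop where
  prob : ∀ ω, IsProbabilityMeasure (κ ω)
  measOuter : ∀ A : Set (S → E), MeasurableSet[F E (floorB Λ)] A →
    Measurable[F E (ringB Λ)] fun ω => κ ω A
  measPast : ∀ A : Set (S → E), MeasurableSet[F E ((Λ : Set S))] A →
    Measurable[F E (past (Λ : Set S))] fun ω => κ ω A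
  proper : ∀ B : Set (S → E), MeasurableSet[F E (ringB Λ)] B →
    ∀ ω, κ ω B = B.indicator (fun _ => (1 : ℝ≥0∞)) ω

/-- A partially oriented specification (POS). -/
structure IsPOS (γ : ∀ Λ : Finset S, (S → E) → BoxMeasure E Λ) : Prop where
  proper : ∀ Λ : Finset S, IsTimeBox Λ → IsProperKernel E Λ (γ Λ)
  consist : ∀ Λ Δ : Finset S, IsTimeBox Λ → IsTimeBox Δ → Λ ⊆ Δ →
    ∀ h : (S → E) → ℝ, Measurable[F E (floorB Λ)] h → Bounded h →
      ∀ ω : S → E, ∫ σ, (∫ ξ, h ξ ∂(γ Λ σ)) ∂(γ Δ ω) = ∫ σ, h σ ∂(γ Δ ω)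

/-- A measure consistent with a POS: a partially oriented chain (γ-POC). -/
def IsPOC (γ : ∀ Λ : Finset S, (S → E) → BoxMeasure E Λ) (μ : Measure (S → E)) : Prop :=
  IsProbabilityMeasure μ ∧
  ∀ Λ : Finset S, IsTimeBox Λ →
    ∀ h : (S → E) → ℝ, Measurable[F E (floorB Λ)] h → Bounded h →
      ∫ σ, (∫ ξ, h ξ ∂(γ Λ σ)) ∂μ = ∫ σ, h σ ∂μ

/-- The tail σ-algebra `ℱ₋∞ = ⋂_{Λ time box} ℱ_{Λ°}`. -/
def tailField : MeasurableSpace (S → E) :=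
  ⨅ (Λ : Finset S) (_ : IsTimeBox Λ), F E (ringB Λ)

/-- Extreme points of the convex set `𝒢(γ)`. -/
def IsExtremePOC (γ : ∀ Λ : Finset S, (S → E) → BoxMeasure E Λ) (μ : Measure (S → E)) : Prop :=
  IsPOC E γ μ ∧
  ∀ (t : ℝ≥0∞) (ν₁ ν₂ : Measure (S → E)), 0 < t → t < 1 →
    IsPOC E γ ν₁ → IsPOC E γ ν₂ → μ = t • ν₁ + (1 - t) • ν₂ → ν₁ = ν₂

/-- A local function: measurable with respect to finitely many coordinates. -/
def IsLocal (f : (S → E) → ℝ) : Prop := ∃ Υ : Finset S, Measurable[F E ((Υ : Set S))] f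

/-- A quasilocal function: uniform limit of bounded local functions. -/
def IsQuasilocal (f : (S → E) → ℝ) : Prop :=
  ∀ ε : ℝ, 0 < ε → ∃ g : (S → E) → ℝ, IsLocal E g ∧ Bounded g ∧ ∀ ω, |f ω - g ω| ≤ ε

/-- A local event. -/
def IsLocalEvent (A : Set (S → E)) : Prop := ∃ Υ : Finset S, MeasurableSet[F E ((Υ : Set S))] A

/-- A quasilocal POS. -/
def IsQuasilocalPOS (γ : ∀ Λ : Finset S, (S → E) → BoxMeasure E Λ) : Prop :=
  IsPOS E γ ∧ ∀ Λ : Finset S, IsTimeBox Λ → ∀ A : Set (S → E), IsLocalEvent E A →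
    MeasurableSet[F E (floorB Λ)] A → IsQuasilocal E fun ω => (γ Λ ω A).toReal

/-- A POMM: a Markovian POS, whose kernels depend on the past only through the nearest past. -/
def IsPOMM (γ : ∀ Λ : Finset S, (S → E) → BoxMeasure E Λ) : Prop :=
  IsPOS E γ ∧ ∀ Λ : Finset S, IsTimeBox Λ → ∀ A : Set (S → E),
    MeasurableSet[F E ((Λ : Set S))] A → Measurable[F E (nearPast Λ)] fun ω => γ Λ ω A

/-- Two configurations agreeing at every site except possibly `x`. -/
def agreeExcept (x : S) (ξ η : S → E) : Prop := ∀ z : S, z ≠ x → ξ z = η z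

/-- The oscillation `δ_x(f)` of `f` at the site `x`. -/
noncomputable def osc (x : S) (f : (S → E) → ℝ) : ℝ :=
  sSup {d : ℝ | ∃ ξ η : S → E, agreeExcept E x ξ η ∧ d = |f ξ - f η|}

/-- A dust-rate matrix for the POS `γ`. -/
def IsDustRate (γ : ∀ Λ : Finset S, (S → E) → BoxMeasure E Λ) (α : S → S → ℝ) : Prop :=
  (∀ ⦃x y : S⦄, x < y → 0 ≤ α y x) ∧
  ∀ y x : S, x < y → ∀ f : (S → E) → ℝ,
    Measurable[F E ({y} : Set S)] f → Bounded f →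
      osc E x (fun ω => ∫ ξ, f ξ ∂(γ {y} ω)) ≤ osc E y f * α y x

/-- The Dobrushin dust-rate matrix built from variational distances of single-site kernels. -/
noncomputable def dobMatrix (γ : ∀ Λ : Finset S, (S → E) → BoxMeasure E Λ) (y x : S) : ℝ :=
  sSup {d : ℝ | ∃ ξ η : S → E, agreeExcept E x ξ η ∧
    d = (1 / 2) * ∑' a : E,
      |((γ {y} ξ) {σ | σ y = a}).toReal - ((γ {y} η) {σ | σ y = a}).toReal|}

/-- The maximal percolation parameters `p_x^γ` of a POMM. -/
noncomputable def percParam (γ : ∀ Λ : Finset S, (S → E) → BoxMeasure E Λ) (x : S) : ℝ :=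
  sSup {d : ℝ | ∃ ξ η : S → E,
    d = (1 / 2) * ∑' a : E,
      |((γ {x} ξ) {σ | σ x = a}).toReal - ((γ {x} η) {σ | σ x = a}).toReal|}

end Kernels

section Percolation

variable {S : Type*} [PartialOrder S]

/-- An oriented (towards the past) open path from `x` to `y`. -/
def OpenPath (X : S → Bool) (x y : S) : Prop :=
  ∃ L : List S, L ≠ [] ∧ L.head? = some x ∧ L.getLast? = some y ∧
    L.Chain' (fun a b => b ∈ sMax (pastPt a)) ∧ ∀ z ∈ L, X z = true

/-- `x` lies in an infinite oriented open cluster: the event `(x → -∞)`. -/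
def ToMinusInfinity (X : S → Bool) (x : S) : Prop :=
  ∃ c : ℕ → S, StrictAnti c ∧ ∀ n, OpenPath X x (c n)

/-- `ψ` is the product Bernoulli measure with parameters `p`. -/
def IsBernoulliProduct (p : S → ℝ) (ψ : Measure (S → Bool)) : Prop :=
  IsProbabilityMeasure ψ ∧ ∀ (T : Finset S) (b : S → Bool),
    ψ {X | ∀ x ∈ T, X x = b x} = ∏ x ∈ T, ENNReal.ofReal (if b x then p x else 1 - p x)

end Percolation


section DustingProof

variable {S : Type*} [PartialOrder S] {E : Type*} [MeasurableSpace E]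

lemma measurable_projF {Υ : Set S} :
    @Measurable (S → E) (Υ → E) (F E Υ) _ (fun ω (z : Υ) => ω z) :=
  fun s hs => ⟨s, hs, rfl⟩

lemma measurable_eval_F {Υ : Set S} {z : S} (hz : z ∈ Υ) :
    Measurable[F E Υ] fun ω : S → E => ω z :=
  (measurable_pi_apply (⟨z, hz⟩ : Υ)).comp measurable_projF

lemma F_mono {Υ Υ' : Set S} (h : Υ ⊆ Υ') : F (S := S) E Υ ≤ F E Υ' := by
  intro A hA
  obtain ⟨B, hB, rfl⟩ := hA
  refine ⟨(fun p (z : Υ) => p ⟨z.1, h z.2⟩) ⁻¹' B, ?_, rfl⟩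
  exact (measurable_pi_lambda _ fun z => measurable_pi_apply _) hB

lemma mem_iff_of_agree {Υ : Set S} {A : Set (S → E)} (hA : MeasurableSet[F E Υ] A)
    {ξ η : S → E} (h : ∀ z ∈ Υ, ξ z = η z) : ξ ∈ A ↔ η ∈ A := by
  obtain ⟨B, -, rfl⟩ := hA
  have he : (fun z : Υ => ξ z) = fun z : Υ => η z := funext fun z => h z z.2
  simp only [Set.mem_preimage, he]

lemma eq_of_agree {Υ : Set S} {β : Type*} [MeasurableSpace β] [MeasurableSingletonClass β]
    {h : (S → E) → β} (hh : Measurable[F E Υ] h)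
    {ξ η : S → E} (hag : ∀ z ∈ Υ, ξ z = η z) : h ξ = h η := by
  have := (mem_iff_of_agree (hh (measurableSet_singleton (h η))) hag).2 (by simp)
  simpa using this

lemma measurable_F_pi {α : Type*} {mα : MeasurableSpace α} {Υ : Set S} {T : α → S → E}
    (h : ∀ z : Υ, Measurable fun a => T a z.1) : @Measurable α (S → E) mα (F E Υ) T := by
  intro s hs
  obtain ⟨t, ht, rfl⟩ := hs
  exact (measurable_pi_lambda (fun a (z : Υ) => T a z.1) fun z => h z) ht

/-- Oscillation helpers. -/
lemma le_osc {x : S} {f : (S → E) → ℝ} (hb : Bounded f) {ξ η : S → E}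
    (hag : agreeExcept E x ξ η) : |f ξ - f η| ≤ osc E x f := by
  obtain ⟨C, hC⟩ := hb
  refine le_csSup ⟨2 * C, ?_⟩ ⟨ξ, η, hag, rfl⟩
  rintro d ⟨ξ', η', -, rfl⟩
  have h1 := hC ξ'; have h2 := hC η'
  have : |f ξ' - f η'| ≤ |f ξ'| + |f η'| := abs_sub _ _
  linarith

lemma osc_le {x : S} {f : (S → E) → ℝ} {M : ℝ} (hM : 0 ≤ M)
    (h : ∀ ξ η, agreeExcept E x ξ η → |f ξ - f η| ≤ M) : osc E x f ≤ M := by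
  rcases Set.eq_empty_or_nonempty
      {d : ℝ | ∃ ξ η : S → E, agreeExcept E x ξ η ∧ d = |f ξ - f η|} with he | hne
  · rw [osc, he, Real.sSup_empty]; exact hM
  · exact csSup_le hne (by rintro d ⟨ξ, η, hag, rfl⟩; exact h ξ η hag)

lemma osc_nonneg {x : S} {f : (S → E) → ℝ} (hb : Bounded f) : 0 ≤ osc E x f := by
  rcases isEmpty_or_nonempty (S → E) with hE | hN
  · have hset : {d : ℝ | ∃ ξ η : S → E, agreeExcept E x ξ η ∧ d = |f ξ - f η|} = ∅ := by
      ext d; simp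
    rw [osc, hset, Real.sSup_empty]
  · have := le_osc (x := x) hb (ξ := Classical.arbitrary (S → E)) (η := Classical.arbitrary (S → E))
      (fun z _ => rfl)
    have h0 : (0 : ℝ) ≤ |f (Classical.arbitrary (S → E)) - f (Classical.arbitrary (S → E))| :=
      abs_nonneg _
    linarith

lemma sSup_of_subset_zero {s : Set ℝ} (h : s ⊆ {0}) : sSup s = 0 := by
  rcases Set.subset_singleton_iff_eq.1 h with rfl | rfl
  · exact Real.sSup_empty
  · exact csSup_singleton 0

lemma integrable_bdd {α : Type*} {m : MeasurableSpace α} {μ : Measure α}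
    [IsFiniteMeasure μ] {f : α → ℝ} (hm : Measurable f) (hb : Bounded f) :
    Integrable f μ := by
  obtain ⟨C, hC⟩ := hb
  exact (integrable_const C).mono' hm.aestronglyMeasurable
    (Filter.Eventually.of_forall fun a => by simpa [Real.norm_eq_abs] using hC a)

section Broom

variable [Countable S] [Countable E] [MeasurableSingletonClass E] [DecidableEq S]
variable {y : S} {κ : (S → E) → BoxMeasure E ({y} : Finset S)}

lemma singleton_timeBox : IsTimeBox ({y} : Finset S) := by
  rw [IsTimeBox, Set.eq_empty_iff_forall_notMem]
  rintro z ⟨⟨hz1, w, hw, hlt⟩, ⟨hz2, w', hw', hlt'⟩⟩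
  simp only [Finset.coe_singleton, Set.mem_singleton_iff] at hw hw'
  subst hw; subst hw'
  exact absurd (hlt.trans hlt') (lt_irrefl _)

lemma y_mem_floorB : y ∈ floorB ({y} : Finset S) := by
  intro hy
  exact hy.1 (by simp)

lemma mem_ringB_of_floorB {z : S} (hz : z ∈ floorB ({y} : Finset S)) (hzy : z ≠ y) :
    z ∈ ringB ({y} : Finset S) := by
  by_cases hle : z ≤ y
  · exact Or.inl ⟨by simpa using hzy, y, by simp, lt_of_le_of_ne hle hzy⟩
  · refine Or.inr fun w hw => ?_
    have hwy : w = y := by simpa using hw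
    subst hwy
    refine ⟨hle, fun hyz => ?_⟩
    exact hz ⟨by simpa using hzy, w, by simp, lt_of_le_of_ne hyz (Ne.symm hzy)⟩

lemma ringB_sub_floorB : ringB ({y} : Finset S) ⊆ floorB ({y} : Finset S) := by
  rintro z (⟨hz1, w, hw, hlt⟩ | hout) ⟨hf1, w', hw', hlt'⟩
  · have h1 : w = y := by simpa using hw
    have h2 : w' = y := by simpa using hw'
    rw [h1] at hlt; rw [h2] at hlt'
    exact absurd (hlt.trans hlt') (lt_irrefl _)
  · have h2 : w' = y := by simpa using hw'
    rw [h2] at hlt'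
    exact (hout y (by simp)).2 hlt'.le

/-- The kernel a.s. freezes the coordinates in the ring. -/
lemma ae_ring_agree (hp : IsProperKernel E ({y} : Finset S) κ) (ω : S → E) :
    ∀ᵐ σ ∂(κ ω), ∀ z : ringB ({y} : Finset S), σ z.1 = ω z.1 := by
  haveI := hp.prob ω
  rw [ae_all_iff]
  intro z
  have hBr : MeasurableSet[F E (ringB ({y} : Finset S))] {σ : S → E | σ z.1 = ω z.1} :=
    measurable_eval_F z.2 (measurableSet_singleton (ω z.1))
  have hB : MeasurableSet[F E (floorB ({y} : Finset S))] {σ : S → E | σ z.1 = ω z.1} :=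
    F_mono ringB_sub_floorB _ hBr
  have h1 : κ ω {σ : S → E | σ z.1 = ω z.1} = 1 := by
    rw [hp.proper _ hBr ω,
      Set.indicator_of_mem (show ω ∈ {σ : S → E | σ z.1 = ω z.1} from rfl)]
  have h0 : κ ω {σ : S → E | σ z.1 = ω z.1}ᶜ = 0 := (prob_compl_eq_zero_iff hB).2 h1
  rw [ae_iff]
  exact h0

/-- Lemma A: representation of the broom through the `y`-coordinate only. -/
lemma broom_repr (hp : IsProperKernel E ({y} : Finset S) κ)
    {f : (S → E) → ℝ} (hf : Measurable[F E (floorB ({y} : Finset S))] f) (ω : S → E) :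
    ∫ σ, f σ ∂(κ ω) = ∫ σ, f (Function.update ω y (σ y)) ∂(κ ω) := by
  refine integral_congr_ae ?_
  filter_upwards [ae_ring_agree hp ω] with σ hσ
  refine eq_of_agree hf fun w hw => ?_
  by_cases hwy : w = y
  · subst hwy; simp
  · rw [Function.update_of_ne hwy]
    exact hσ ⟨w, mem_ringB_of_floorB hw hwy⟩

/-- Lemma D: the broom of an `ℱ_{y}`-measurable function depends on the boundary
condition only through the coordinates in the past of `y`. -/
lemma broom_past (hp : IsProperKernel E ({y} : Finset S) κ)
    {h : (S → E) → ℝ} (hh : Measurable[F E ((({y} : Finset S) : Set S))] h) (hbd : Bounded h)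
    {ξ η : S → E} (hag : ∀ z ∈ past ((({y} : Finset S) : Set S)), ξ z = η z) :
    ∫ σ, h σ ∂(κ ξ) = ∫ σ, h σ ∂(κ η) := by
  have hevalm : Measurable[F E (floorB ({y} : Finset S))] (fun σ : S → E => σ y) :=
    measurable_eval_F y_mem_floorB
  have key : ∀ ω, ∫ σ, h σ ∂(κ ω)
      = ∑' a : E, ((κ ω) {σ : S → E | σ y = a}).toReal • h (Function.update ξ y a) := by
    intro ω
    haveI := hp.prob ω
    let ν : Measure E :=
      @Measure.map (S → E) E (F E (floorB ({y} : Finset S))) _ (fun σ : S → E => σ y) (κ ω)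
    have hrw : ∀ σ : S → E, h σ = h (Function.update ξ y (σ y)) := by
      intro σ
      refine eq_of_agree hh fun w hw => ?_
      simp only [Finset.coe_singleton, Set.mem_singleton_iff] at hw
      subst hw; simp
    have hφ : Measurable fun a : E => h (Function.update ξ y a) := measurable_of_countable _
    haveI : IsProbabilityMeasure ν := Measure.isProbabilityMeasure_map hevalm.aemeasurable
    have hint : Integrable (fun a : E => h (Function.update ξ y a)) ν := by
      obtain ⟨C, hC⟩ := hbd
      exact integrable_bdd hφ ⟨C, fun a => hC _⟩
    have hmapa : ∀ a : E, ν {a} = (κ ω) {σ : S → E | σ y = a} := fun a =>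
      Measure.map_apply hevalm (measurableSet_singleton a)
    calc ∫ σ, h σ ∂(κ ω) = ∫ σ, h (Function.update ξ y (σ y)) ∂(κ ω) :=
          integral_congr_ae (Filter.Eventually.of_forall hrw)
      _ = ∫ a, h (Function.update ξ y a) ∂ν :=
          (integral_map hevalm.aemeasurable hφ.aestronglyMeasurable).symm
      _ = ∑' a : E, (ν {a}).toReal • h (Function.update ξ y a) := integral_countable' hint
      _ = ∑' a : E, ((κ ω) {σ : S → E | σ y = a}).toReal • h (Function.update ξ y a) := by
          exact tsum_congr fun a => by rw [hmapa a]
  rw [key ξ, key η]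
  refine tsum_congr fun a => ?_
  congr 2
  have hA : MeasurableSet[F E ((({y} : Finset S) : Set S))] {σ : S → E | σ y = a} :=
    measurable_eval_F (by simp) (measurableSet_singleton a)
  exact eq_of_agree (hp.measPast _ hA) hag

end Broom

end DustingProof

/-- **Multisite dusting lemma**: the effect of the single-site "broom" `γ_y` on the
oscillations of a bounded `ℱ_{⌊{y}⌋}`-measurable function. -/
theorem multisite_dusting {S : Type*} [PartialOrder S] [Countable S]
    {E : Type*} [MeasurableSpace E] [Countable E] [MeasurableSingletonClass E]
    (hS : Standing S)
    (γ : ∀ Λ : Finset S, (S → E) → BoxMeasure E Λ) (hγ : IsPOS E γ)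
    (α : S → S → ℝ) (hα : IsDustRate E γ α)
    (y : S) (f : (S → E) → ℝ)
    (hf : Measurable[F E (floorB ({y} : Finset S))] f) (hb : Bounded f) :
    (osc E y (fun ω => ∫ ξ, f ξ ∂(γ ({y} : Finset S) ω)) = 0) ∧
    (∀ x : S, ¬ x ≤ y → ¬ y ≤ x →
      osc E x (fun ω => ∫ ξ, f ξ ∂(γ ({y} : Finset S) ω)) ≤ osc E x f) ∧
    (∀ x : S, x < y →
      osc E x (fun ω => ∫ ξ, f ξ ∂(γ ({y} : Finset S) ω))
        ≤ osc E x f + osc E y f * α y x) := by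
  classical
  have tb : IsTimeBox ({y} : Finset S) := singleton_timeBox
  have hp : IsProperKernel E ({y} : Finset S) (γ ({y} : Finset S)) := hγ.proper _ tb
  obtain ⟨C, hC⟩ := hb
  have hysub : ((({y} : Finset S) : Set S)) ⊆ floorB ({y} : Finset S) := by
    intro z hz
    have hz' : z = y := by simpa using hz
    rw [hz']
    exact y_mem_floorB
  have hT : ∀ τ : S → E, @Measurable (S → E) (S → E)
      (F E ((({y} : Finset S) : Set S))) (F E (floorB ({y} : Finset S)))
      (fun σ : S → E => Function.update τ y (σ y)) := by
    intro τ
    apply measurable_F_pi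
    rintro ⟨z, hz⟩
    by_cases hzy : z = y
    · subst hzy
      simp only [Function.update_self]
      exact measurable_eval_F (by simp)
    · simp only [Function.update_of_ne hzy]
      exact measurable_const
  have hH : ∀ τ : S → E, Measurable[F E ((({y} : Finset S) : Set S))]
      (fun σ : S → E => f (Function.update τ y (σ y))) := fun τ => hf.comp (hT τ)
  have hHb : ∀ τ : S → E, Bounded (fun σ : S → E => f (Function.update τ y (σ y))) :=
    fun τ => ⟨C, fun σ => hC _⟩
  have hpast : ∀ z ∈ past ((({y} : Finset S) : Set S)), z < y := by
    rintro z ⟨hz1, w, hw, hlt⟩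
    have hwy : w = y := by simpa using hw
    rwa [hwy] at hlt
  have first : ∀ (x : S) (ξ η : S → E), agreeExcept E x ξ η →
      |(∫ σ, f (Function.update ξ y (σ y)) ∂(γ ({y} : Finset S) ξ))
        - ∫ σ, f (Function.update η y (σ y)) ∂(γ ({y} : Finset S) ξ)| ≤ osc E x f := by
    intro x ξ η hag
    haveI := hp.prob ξ
    have hi1 : Integrable (fun σ : S → E => f (Function.update ξ y (σ y)))
        (γ ({y} : Finset S) ξ) :=
      integrable_bdd ((hH ξ).mono (F_mono hysub) le_rfl) (hHb ξ)
    have hi2 : Integrable (fun σ : S → E => f (Function.update η y (σ y)))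
        (γ ({y} : Finset S) ξ) :=
      integrable_bdd ((hH η).mono (F_mono hysub) le_rfl) (hHb η)
    rw [← integral_sub hi1 hi2]
    have hbd : ∀ σ : S → E,
        ‖f (Function.update ξ y (σ y)) - f (Function.update η y (σ y))‖ ≤ osc E x f := by
      intro σ
      rw [Real.norm_eq_abs]
      refine le_osc ⟨C, hC⟩ fun z hz => ?_
      by_cases hzy : z = y
      · subst hzy; simp
      · rw [Function.update_of_ne hzy, Function.update_of_ne hzy]
        exact hag z hz
    have hni := norm_integral_le_of_norm_le_const (μ := γ ({y} : Finset S) ξ)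
      (Filter.Eventually.of_forall hbd)
    rwa [measureReal_def, measure_univ, ENNReal.toReal_one, mul_one, Real.norm_eq_abs] at hni
  refine ⟨?_, ?_, ?_⟩
  · -- x = y : oscillation vanishes
    refine sSup_of_subset_zero ?_
    rintro d ⟨ξ, η, hag, rfl⟩
    have hupd : ∀ σ : S → E, Function.update ξ y (σ y) = Function.update η y (σ y) := by
      intro σ; funext z
      by_cases hzy : z = y
      · subst hzy; simp
      · rw [Function.update_of_ne hzy, Function.update_of_ne hzy]
        exact hag z hzy
    have e1 := broom_repr hp hf ξ
    have e2 := broom_repr hp hf η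
    have e3 : (∫ σ, f (Function.update ξ y (σ y)) ∂(γ ({y} : Finset S) ξ))
        = ∫ σ, f (Function.update ξ y (σ y)) ∂(γ ({y} : Finset S) η) :=
      broom_past hp (hH ξ) (hHb ξ) fun z hz => hag z (ne_of_lt (hpast z hz))
    have : (∫ σ, f σ ∂(γ ({y} : Finset S) ξ)) = ∫ σ, f σ ∂(γ ({y} : Finset S) η) := by
      rw [e1, e2, e3]
      simp_rw [hupd]
    simp [this]
  · -- x incomparable with y
    intro x hxy hyx
    refine osc_le (osc_nonneg ⟨C, hC⟩) fun ξ η hag => ?_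
    have e1 := broom_repr hp hf ξ
    have e2 := broom_repr hp hf η
    have e3 : (∫ σ, f (Function.update η y (σ y)) ∂(γ ({y} : Finset S) η))
        = ∫ σ, f (Function.update η y (σ y)) ∂(γ ({y} : Finset S) ξ) :=
      (broom_past hp (hH η) (hHb η) fun z hz =>
        hag z fun h => hxy (h ▸ (hpast z hz).le)).symm
    show |(∫ σ, f σ ∂(γ ({y} : Finset S) ξ)) - ∫ σ, f σ ∂(γ ({y} : Finset S) η)| ≤ osc E x f
    rw [e1, e2, e3]
    exact first x ξ η hag
  · -- x < y
    intro x hx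
    have hα0 := hα.1 hx
    refine osc_le (add_nonneg (osc_nonneg ⟨C, hC⟩) (mul_nonneg (osc_nonneg ⟨C, hC⟩) hα0))
      fun ξ η hag => ?_
    have e1 := broom_repr hp hf ξ
    have e2 := broom_repr hp hf η
    show |(∫ σ, f σ ∂(γ ({y} : Finset S) ξ)) - ∫ σ, f σ ∂(γ ({y} : Finset S) η)|
      ≤ osc E x f + osc E y f * α y x
    rw [e1, e2]
    have t1 := first x ξ η hag
    have hGb : Bounded (fun ω : S → E =>
        ∫ σ, f (Function.update η y (σ y)) ∂(γ ({y} : Finset S) ω)) := by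
      refine ⟨C, fun ω => ?_⟩
      haveI := hp.prob ω
      have hni := norm_integral_le_of_norm_le_const (μ := γ ({y} : Finset S) ω) (C := C)
        (Filter.Eventually.of_forall fun σ : S → E => by
          rw [Real.norm_eq_abs]; exact hC (Function.update η y (σ y)))
      rwa [measureReal_def, measure_univ, ENNReal.toReal_one, mul_one, Real.norm_eq_abs] at hni
    have hH' : Measurable[F E ({y} : Set S)]
        (fun σ : S → E => f (Function.update η y (σ y))) := by
      rw [← Finset.coe_singleton y]
      exact hH η
    have hdust := hα.2 y x hx _ hH' (hHb η)
    have hoscle : osc E y (fun σ : S → E => f (Function.update η y (σ y))) ≤ osc E y f := by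
      refine osc_le (osc_nonneg ⟨C, hC⟩) fun σ τ hagp => ?_
      refine le_osc ⟨C, hC⟩ fun z hz => ?_
      rw [Function.update_of_ne hz, Function.update_of_ne hz]
    have t2 : |(∫ σ, f (Function.update η y (σ y)) ∂(γ ({y} : Finset S) ξ))
        - ∫ σ, f (Function.update η y (σ y)) ∂(γ ({y} : Finset S) η)|
        ≤ osc E y f * α y x :=
      (le_osc hGb hag).trans (hdust.trans (mul_le_mul_of_nonneg_right hoscle hα0))
    exact (abs_sub_le _ _ _).trans (add_le_add t1 t2)
end POCpaper
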